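/- arXiv:1712.03068 — 7 statements merged into one kernel-verified Lean document; each statement's English description precedes it below -/
import Mathlib

section
/- Let A be a commutative ring, let X and Y be derivations of A, and let P, Q ∈ A satisfy X(Y(f)) − Y(X(f)) = P·X(f) + Q·Y(f) for all f ∈ A. Let A₀, B₀, C₀ ∈ A and suppose θ ∈ A satisfies X(Y(θ)) + A₀·X(θ) + B₀·Y(θ) + C₀·θ = 0. Assume the Laplace invariant H₀ := X(A₀) + A₀·B₀ − C₀ is a unit of A with inverse H₀⁻¹. Then the Laplace transform η₁ := Y(θ) + A₀·θ satisfies an equation of the same form, X(Y(η₁)) + A₁·X(η₁) + B₁·Y(η₁) + C₁·η₁ = 0, where A₁ = A₀ − H₀⁻¹·Y(H₀) − P, B₁ = B₀ − Q, and C₁ = C₀ − X(A₀) − H₀⁻¹·Y(H₀)·B₀ + Y(B₀). -/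
/-!
Writing `η = Y θ + A₀ θ`, the equation for `θ` factors as `X η + B₀ η = H₀ θ`, so `θ = H₀⁻¹ (X η + B₀ η)`.
Substituting this into `η = Y θ + A₀ θ` and commuting `Y X` past `X Y` with the commutator relation
gives a second-order equation for `η`; the `Y H₀` term comes from `Y` hitting the factor `H₀⁻¹`.
-/

namespace Derivation

variable {R A : Type*} [CommRing R] [CommRing A] [Algebra R A] (X Y : Derivation R A A)

def hyperbolicOp (a b c θ : A) : A :=
  X (Y θ) + a * X θ + b * Y θ + c * θ

theorem hyperbolicOp_factorization (a b c θ : A) :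
    X (Y θ + a * θ) + b * (Y θ + a * θ) = hyperbolicOp X Y a b c θ + (X a + a * b - c) * θ := by
  simp only [hyperbolicOp, map_add, leibniz, smul_eq_mul]
  ring

theorem hyperbolicOp_laplaceY {P Q : A} (hcomm : ∀ f : A, X (Y f) - Y (X f) = P * X f + Q * Y f)
    {a b h θ : A} (hθ : X (Y θ + a * θ) + b * (Y θ + a * θ) = h * θ) :
    hyperbolicOp X Y (a - P) (b - Q) (Y b + a * b - h) (Y θ + a * θ) = Y h * θ := by
  set η := Y θ + a * θ with hη
  have hYθ := congrArg Y hθ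
  simp only [map_add, leibniz, smul_eq_mul] at hYθ
  unfold hyperbolicOp
  linear_combination hcomm η + hYθ + a * hθ + h * hη

end Derivation

/-- The generalized (Y-)Laplace transformation: if `θ` solves the linearized hyperbolic
equation with coefficients `A₀, B₀, C₀` and the Laplace invariant `H₀ = X A₀ + A₀ B₀ - C₀`
is a unit, then `η₁ = Y θ + A₀ θ` solves an equation of the same form with the
transformed coefficients. -/
theorem laplace_transform_Y
    {A : Type*} [CommRing A] (X Y : Derivation ℤ A A) (P Q : A)
    (hcomm : ∀ f : A, X (Y f) - Y (X f) = P * X f + Q * Y f)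
    (A₀ B₀ C₀ θ : A)
    (hθ : X (Y θ) + A₀ * X θ + B₀ * Y θ + C₀ * θ = 0)
    (H₀ H₀inv : A) (hH₀ : H₀ = X A₀ + A₀ * B₀ - C₀)
    (hinv : H₀ * H₀inv = 1) :
    X (Y (Y θ + A₀ * θ))
      + (A₀ - H₀inv * Y H₀ - P) * X (Y θ + A₀ * θ)
      + (B₀ - Q) * Y (Y θ + A₀ * θ)
      + (C₀ - X A₀ - H₀inv * Y H₀ * B₀ + Y B₀) * (Y θ + A₀ * θ) = 0 := by
  have hη : X (Y θ + A₀ * θ) + B₀ * (Y θ + A₀ * θ) = H₀ * θ := by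
    rw [Derivation.hyperbolicOp_factorization X Y A₀ B₀ C₀, Derivation.hyperbolicOp, hθ, hH₀, zero_add]
  have key := Derivation.hyperbolicOp_laplaceY X Y hcomm hη
  unfold Derivation.hyperbolicOp at key
  linear_combination key - H₀inv * Y H₀ * hη - Y H₀ * θ * hinv + (Y θ + A₀ * θ) * hH₀
end

section
/- Let A be a commutative ring, let X and Y be derivations of A, and let a, b, c ∈ A. Suppose θ ∈ A satisfies X(Y(θ)) + a·X(θ) + b·Y(θ) + c·θ = 0. Set η := Y(θ) + a·θ and h := X(a) + a·b − c. Then X(η) + b·η = h·θ. In particular, if h is a unit of A, then θ = h⁻¹·(X(η) + b·η); that is, the Laplace transformation θ ↦ Y(θ) + a·θ is inverted by η ↦ h⁻¹·(X(η) + b·η). -/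
theorem Derivation.laplace_transform_descent {R A : Type*} [CommSemiring R] [CommRing A]
    [Algebra R A] (X Y : Derivation R A A) (a b c θ : A) :
    X (Y θ + a * θ) + b * (Y θ + a * θ) =
      (X (Y θ) + a * X θ + b * Y θ + c * θ) + (X a + a * b - c) * θ := by
  rw [map_add, Derivation.leibniz, smul_eq_mul, smul_eq_mul]
  ring

/-- The first-order descent relation `X η + b η = h θ` for the Laplace transform
`η = Y θ + a θ`, and the inverse Laplace transform when the Laplace invariant `h` is a unit. -/
theorem laplace_transform_inverse
    {A : Type*} [CommRing A] (X Y : Derivation ℤ A A) (a b c θ : A)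
    (hθ : X (Y θ) + a * X θ + b * Y θ + c * θ = 0) :
    X (Y θ + a * θ) + b * (Y θ + a * θ) = (X a + a * b - c) * θ ∧
    ∀ hinv : A, (X a + a * b - c) * hinv = 1 →
      θ = hinv * (X (Y θ + a * θ) + b * (Y θ + a * θ)) := by
  have descent : X (Y θ + a * θ) + b * (Y θ + a * θ) = (X a + a * b - c) * θ := by
    rw [Derivation.laplace_transform_descent, hθ, zero_add]
  refine ⟨descent, fun hinv hinv_mul => ?_⟩
  rw [descent, ← mul_assoc, mul_comm hinv, hinv_mul, one_mul]
end

section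
/- Let A be a commutative ring, let X and Y be derivations of A, let a, b, c ∈ A, and let μ be a unit of A with inverse μ⁻¹. Suppose θ ∈ A satisfies X(Y(θ)) + a·X(θ) + b·Y(θ) + c·θ = 0. Set Θ := μ·θ, and define A₀ = a − μ⁻¹·Y(μ), B₀ = b − μ⁻¹·X(μ), C₀ = c − μ⁻¹·X(Y(μ)) − a·μ⁻¹·X(μ) − b·μ⁻¹·Y(μ) + 2·μ⁻²·X(μ)·Y(μ). Then X(Y(Θ)) + A₀·X(Θ) + B₀·Y(Θ) + C₀·Θ = 0. -/
/-!
Expanding `X (Y (μ θ))`, `X (μ θ)` and `Y (μ θ)` by the Leibniz rule, the correction terms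
in `A₀, B₀, C₀` are exactly those cancelling every term with a derivative of `μ`, so the
rescaled operator applied to `μ θ` is `μ` times the original operator applied to `θ`.
-/

namespace Derivation

variable {R A : Type*} [CommSemiring R] [CommSemiring A] [Algebra R A]

theorem apply_apply_mul (X Y : Derivation R A A) (f g : A) :
    X (Y (f * g)) = X (Y f) * g + Y f * X g + X f * Y g + f * X (Y g) := by
  simp only [leibniz, map_add, smul_eq_mul]
  ring

end Derivation

section HyperbolicOp

variable {R A : Type*} [CommSemiring R] [CommRing A] [Algebra R A]

def hyperbolicOp (X Y : Derivation R A A) (a b c θ : A) : A :=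
  X (Y θ) + a * X θ + b * Y θ + c * θ

theorem hyperbolicOp_rescale (X Y : Derivation R A A) (a b c θ μ μinv : A)
    (hμ : μ * μinv = 1) :
    hyperbolicOp X Y (a - μinv * Y μ) (b - μinv * X μ)
        (c - μinv * X (Y μ) - a * (μinv * X μ) - b * (μinv * Y μ)
          + 2 * (μinv * μinv) * X μ * Y μ) (μ * θ) =
      μ * hyperbolicOp X Y a b c θ := by
  rw [hyperbolicOp, hyperbolicOp, Derivation.apply_apply_mul]
  simp only [Derivation.leibniz, smul_eq_mul]
  linear_combination (-(Y μ * X θ + X μ * Y θ + X (Y μ) * θ + a * X μ * θ + b * Y μ * θ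
      - 2 * μinv * X μ * Y μ * θ)) * hμ

end HyperbolicOp

/-- Rescaling covariance of the universal linearization: if `θ` solves the linearized
hyperbolic equation and `μ` is a unit, then `Θ = μ·θ` solves the equation with the
rescaled coefficients `A₀, B₀, C₀`. -/
theorem linearization_rescaling
    {A : Type*} [CommRing A] (X Y : Derivation ℤ A A) (a b c θ μ μinv : A)
    (hμ : μ * μinv = 1)
    (hθ : X (Y θ) + a * X θ + b * Y θ + c * θ = 0)
    (A₀ B₀ C₀ : A)
    (hA₀ : A₀ = a - μinv * Y μ)
    (hB₀ : B₀ = b - μinv * X μ)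
    (hC₀ : C₀ = c - μinv * X (Y μ) - a * (μinv * X μ) - b * (μinv * Y μ)
        + 2 * (μinv * μinv) * X μ * Y μ) :
    X (Y (μ * θ)) + A₀ * X (μ * θ) + B₀ * Y (μ * θ) + C₀ * (μ * θ) = 0 := by
  subst hA₀ hB₀ hC₀
  simpa only [hyperbolicOp, hθ, mul_zero] using hyperbolicOp_rescale X Y a b c θ μ μinv hμ
end

section
/- Let A be a commutative ring, let X and Y be derivations of A, let a, b, c ∈ A, and let μ be a unit of A with inverse μ⁻¹. Define the rescaled coefficients A₀ = a − μ⁻¹·Y(μ), B₀ = b − μ⁻¹·X(μ), C₀ = c − μ⁻¹·X(Y(μ)) − a·μ⁻¹·X(μ) − b·μ⁻¹·Y(μ) + 2·μ⁻²·X(μ)·Y(μ). Then the Laplace invariant is unchanged by the rescaling: X(A₀) + A₀·B₀ − C₀ = X(a) + a·b − c. Moreover, for any further coefficient a' ∈ A with rescaling A₀' = a' − μ⁻¹·Y(μ), one has A₀' − A₀ = a' − a, so differences of first coefficients (the invariants H_{ijk}) are also unchanged. -/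
/-! The only input beyond ring arithmetic is the derivative of the inverse,
`X μ⁻¹ = -μ⁻² X μ`; with it, the first-order terms in `μ⁻¹ X μ`, `μ⁻¹ Y μ` and the
second-order term `μ⁻¹ X (Y μ)` produced by `X A₀ + A₀ B₀` cancel exactly against
those in `C₀`. -/

theorem Derivation.laplace_invariant_rescale {R A : Type*} [CommRing R] [CommRing A]
    [Algebra R A] (X Y : Derivation R A A) (a b c μ ν : A) (hμ : μ * ν = 1) :
    X (a - ν * Y μ) + (a - ν * Y μ) * (b - ν * X μ)
        - (c - ν * X (Y μ) - a * (ν * X μ) - b * (ν * Y μ) + 2 * (ν * ν) * X μ * Y μ)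
      = X a + a * b - c := by
  have hXν : X ν = -ν ^ 2 * X μ := X.leibniz_of_mul_eq_one (by rw [mul_comm, hμ])
  rw [map_sub, Derivation.leibniz, hXν, smul_eq_mul, smul_eq_mul]
  ring

/-- The Laplace invariant `X a + a b - c` is unchanged under rescaling of the contact
form by a unit `μ`; moreover differences of first coefficients (the invariants `H_{ijk}`)
are also unchanged. -/
theorem laplace_invariant_rescaling_invariance
    {A : Type*} [CommRing A] (X Y : Derivation ℤ A A) (a b c μ μinv : A)
    (hμ : μ * μinv = 1)
    (A₀ B₀ C₀ : A)
    (hA₀ : A₀ = a - μinv * Y μ)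
    (hB₀ : B₀ = b - μinv * X μ)
    (hC₀ : C₀ = c - μinv * X (Y μ) - a * (μinv * X μ) - b * (μinv * Y μ)
        + 2 * (μinv * μinv) * X μ * Y μ) :
    X A₀ + A₀ * B₀ - C₀ = X a + a * b - c ∧
    ∀ a' : A, (a' - μinv * Y μ) - A₀ = a' - a := by
  subst hA₀ hB₀ hC₀
  exact ⟨X.laplace_invariant_rescale Y a b c μ μinv hμ,
    fun a' => sub_sub_sub_cancel_right a' a _⟩
end

section
/- Let A be a commutative ring and let X and Y be commuting derivations of A, i.e. X(Y(f)) = Y(X(f)) for all f ∈ A. Let a, b, c ∈ A, set h := X(a) + a·b − c, and define L*(ρ) = X(Y(ρ)) − a·X(ρ) − b·Y(ρ) + (c − X(a) − Y(b))·ρ. Then for every ρ ∈ A, L*(ρ) = Y(X(ρ) − b·ρ) − a·(X(ρ) − b·ρ) − h·ρ. Consequently L*(ρ) = 0 if and only if ψ := X(ρ) − b·ρ satisfies Y(ψ) = h·ρ + a·ψ; i.e., the adjoint equation is equivalent to the first-order system X(ρ) = b·ρ + ψ, Y(ψ) = h·ρ + a·ψ. -/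
/-! Expanding `Y (X ρ - b ρ)` by the Leibniz rule and swapping `Y X ρ` for `X Y ρ` reproduces
`L*(ρ)` up to the term `(X a + a b - c) ρ`, which is exactly the Laplace invariant `h` times `ρ`. -/

theorem Derivation.adjoint_eq_laplace_factorization {R A : Type*} [CommRing R] [CommRing A]
    [Algebra R A] (X Y : Derivation R A A) (hcomm : ∀ f : A, X (Y f) = Y (X f)) (a b c ρ : A) :
    X (Y ρ) - a * X ρ - b * Y ρ + (c - X a - Y b) * ρ
      = Y (X ρ - b * ρ) - a * (X ρ - b * ρ) - (X a + a * b - c) * ρ := by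
  rw [map_sub, Derivation.leibniz, hcomm, smul_eq_mul, smul_eq_mul]
  ring

/-- The adjoint equation `L*(ρ) = 0` rewritten as a first-order system: with
`h = X a + a b - c` the Laplace invariant, `L*(ρ) = Y(X ρ - b ρ) - a·(X ρ - b ρ) - h·ρ`,
so `L*(ρ) = 0` iff `ψ = X ρ - b ρ` satisfies `Y ψ = h ρ + a ψ`. -/
theorem adjoint_first_order_system
    {A : Type*} [CommRing A] (X Y : Derivation ℤ A A)
    (hcomm : ∀ f : A, X (Y f) = Y (X f))
    (a b c h : A) (hh : h = X a + a * b - c) :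
    (∀ ρ : A, X (Y ρ) - a * X ρ - b * Y ρ + (c - X a - Y b) * ρ
        = Y (X ρ - b * ρ) - a * (X ρ - b * ρ) - h * ρ) ∧
    (∀ ρ : A, (X (Y ρ) - a * X ρ - b * Y ρ + (c - X a - Y b) * ρ = 0 ↔
        Y (X ρ - b * ρ) = h * ρ + a * (X ρ - b * ρ))) := by
  subst hh
  have factorization := X.adjoint_eq_laplace_factorization Y hcomm a b c
  refine ⟨factorization, fun ρ => ?_⟩
  rw [factorization, sub_sub, sub_eq_zero, add_comm]
end

section
/- Let A be a commutative ring and let X and Z be derivations of A such that there exist p, q ∈ A with X(Z(f)) − Z(X(f)) = p·X(f) + q·Z(f) for all f ∈ A. Suppose I, K ∈ A satisfy X(I) = 0 and Z(K) = 0, and that X(K) and Z(I) are units of A. Then the rescaled derivations X̃ := (X(K))⁻¹·X and Z̃ := (Z(I))⁻¹·Z commute: X̃(Z̃(f)) = Z̃(X̃(f)) for all f ∈ A. -/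
/-!
Rescaling by `a` and `b` changes the commutator by terms proportional to `X b` and `Z a`:
`[aX, bZ] = ab[X, Z] + a X(b) Z - b Z(a) X`. Evaluating `[X, Z] = pX + qZ` at the invariants
gives `X (Z I) = q Z I` and `Z (X K) = -p X K`, so the inverses satisfy `X (Z I)⁻¹ = -q (Z I)⁻¹`
and `Z (X K)⁻¹ = p (X K)⁻¹`; with `a = (X K)⁻¹`, `b = (Z I)⁻¹` the correction terms then
cancel `ab[X, Z]` exactly.
-/

namespace Derivation

variable {R A : Type*} [CommRing R] [CommRing A] [Algebra R A]

theorem map_eq_neg_mul_of_mul_eq_one_of_map_eq_mul (D : Derivation R A A) {c c' r : A}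
    (hD : D c = r * c) (hc : c * c' = 1) : D c' = -(r * c') := by
  rw [D.leibniz_of_mul_eq_one (mul_comm c c' ▸ hc), hD, smul_eq_mul]
  linear_combination (-(r * c')) * hc

theorem mul_map_mul_sub_mul_map_mul (X Z : Derivation R A A) (a b f : A) :
    a * X (b * Z f) - b * Z (a * X f) =
      a * b * (X (Z f) - Z (X f)) + a * X b * Z f - b * Z a * X f := by
  simp only [leibniz, smul_eq_mul]
  ring

end Derivation

/-- Rescaling characteristic vector fields to commute: if `[X,Z] = p·X + q·Z`,
`X I = 0`, `Z K = 0`, and `X K`, `Z I` are units with inverses `Kinv`, `Iinv`, then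
the rescaled derivations `X̃ = Kinv·X` and `Z̃ = Iinv·Z` commute. -/
theorem rescaled_characteristics_commute
    {A : Type*} [CommRing A] (X Z : Derivation ℤ A A)
    (p q : A) (hcomm : ∀ f : A, X (Z f) - Z (X f) = p * X f + q * Z f)
    (I K : A) (hI : X I = 0) (hK : Z K = 0)
    (Kinv Iinv : A) (hKinv : X K * Kinv = 1) (hIinv : Z I * Iinv = 1) :
    ∀ f : A, Kinv * X (Iinv * Z f) = Iinv * Z (Kinv * X f) := by
  intro f
  have hXZI : X (Z I) = q * Z I := by
    simpa [hI] using hcomm I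
  have hZXK : Z (X K) = -p * X K := by
    simpa [hK, neg_eq_iff_eq_neg] using hcomm K
  have hXIinv := X.map_eq_neg_mul_of_mul_eq_one_of_map_eq_mul hXZI hIinv
  have hZKinv := Z.map_eq_neg_mul_of_mul_eq_one_of_map_eq_mul hZXK hKinv
  rw [← sub_eq_zero, X.mul_map_mul_sub_mul_map_mul, hcomm f, hXIinv, hZKinv]
  ring
end

section
/- For real numbers u, u₁, u₂, u₃ with u ≠ 0 and u ≠ −1, set f₁₂ = (2u+1)·u₁·u₂/(u·(u+1)), f₁₃ = u₁·u₃/(u+1), f₂₃ = u₂·u₃/u. Then the total-derivative compatibility conditions of the system u₁₂ = f₁₂, u₁₃ = f₁₃, u₂₃ = f₂₃ hold identically: u₃·∂f₁₂/∂u + f₁₃·∂f₁₂/∂u₁ + f₂₃·∂f₁₂/∂u₂ = u₂·∂f₁₃/∂u + f₁₂·∂f₁₃/∂u₁ + f₂₃·∂f₁₃/∂u₃ = u₁·∂f₂₃/∂u + f₁₂·∂f₂₃/∂u₂ + f₁₃·∂f₂₃/∂u₃, and each of these three expressions equals 2·u₁·u₂·u₃/(u·(u+1)). (Here ∂/∂u,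 ∂/∂u₁, ∂/∂u₂, ∂/∂u₃ denote partial derivatives of the explicit rational functions f₁₂, f₁₃, f₂₃ with respect to the indicated variable, the other variables held fixed.) -/
/-!
Each of the three cross total derivatives is a rational function of `u, u₁, u₂, u₃` that
simplifies to `2u₁u₂u₃/(u(u+1))`. The only derivative that is not immediate is `∂f₁₂/∂u`,
which the partial fraction decomposition `(2u+1)/(u(u+1)) = 1/u + 1/(u+1)` makes explicit.
-/

theorem deriv_const_div_add_one (c x : ℝ) :
    deriv (fun t => c / (t + 1)) x = -c / (x + 1) ^ 2 := by
  rw [deriv_comp_add_const (f := fun t => c / t), deriv_const_div_id]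

theorem deriv_two_mul_add_one_mul_mul_div_mul_add_one (a b x : ℝ) (hx : x ≠ 0) (hx1 : x ≠ -1) :
    deriv (fun t => (2 * t + 1) * a * b / (t * (t + 1))) x =
      -(a * b) / x ^ 2 + -(a * b) / (x + 1) ^ 2 := by
  have partial_fractions :
      (fun t => (2 * t + 1) * a * b / (t * (t + 1))) =ᶠ[nhds x]
        fun t => a * b / t + a * b / (t + 1) := by
    filter_upwards [eventually_ne_nhds hx, eventually_ne_nhds hx1] with t ht ht1
    have ht1' : t + 1 ≠ 0 := mt add_eq_zero_iff_eq_neg.mp ht1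
    field_simp
    ring
  have hx1' : x + 1 ≠ 0 := mt add_eq_zero_iff_eq_neg.mp hx1
  have hdiff₀ : DifferentiableAt ℝ (fun t => a * b / t) x := by fun_prop (disch := exact hx)
  have hdiff₁ : DifferentiableAt ℝ (fun t => a * b / (t + 1)) x := by fun_prop (disch := exact hx1')
  rw [partial_fractions.deriv_eq, deriv_fun_add hdiff₀ hdiff₁, deriv_const_div_id,
    deriv_const_div_add_one]

section Vassiliou

variable {u : ℝ} (u₁ u₂ u₃ : ℝ)

theorem vassiliou_D₃f₁₂_eq (hu : u ≠ 0) (hu1 : u ≠ -1) :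
    u₃ * deriv (fun t => (2 * t + 1) * u₁ * u₂ / (t * (t + 1))) u
      + u₁ * u₃ / (u + 1) * deriv (fun t => (2 * u + 1) * t * u₂ / (u * (u + 1))) u₁
      + u₂ * u₃ / u * deriv (fun t => (2 * u + 1) * u₁ * t / (u * (u + 1))) u₂ =
    2 * u₁ * u₂ * u₃ / (u * (u + 1)) := by
  have hu1' : u + 1 ≠ 0 := mt add_eq_zero_iff_eq_neg.mp hu1
  rw [deriv_two_mul_add_one_mul_mul_div_mul_add_one _ _ _ hu hu1]
  simp only [deriv_div_const, deriv_mul_const_field, deriv_const_mul_id']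
  field_simp
  ring

theorem vassiliou_D₂f₁₃_eq (hu : u ≠ 0) (hu1 : u ≠ -1) :
    u₂ * deriv (fun t => u₁ * u₃ / (t + 1)) u
      + (2 * u + 1) * u₁ * u₂ / (u * (u + 1)) * deriv (fun t => t * u₃ / (u + 1)) u₁
      + u₂ * u₃ / u * deriv (fun t => u₁ * t / (u + 1)) u₃ =
    2 * u₁ * u₂ * u₃ / (u * (u + 1)) := by
  have hu1' : u + 1 ≠ 0 := mt add_eq_zero_iff_eq_neg.mp hu1
  rw [deriv_const_div_add_one]
  simp only [deriv_div_const, deriv_mul_const_field, deriv_const_mul_id', deriv_id'']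
  field_simp
  ring

theorem vassiliou_D₁f₂₃_eq (hu : u ≠ 0) (hu1 : u ≠ -1) :
    u₁ * deriv (fun t => u₂ * u₃ / t) u
      + (2 * u + 1) * u₁ * u₂ / (u * (u + 1)) * deriv (fun t => t * u₃ / u) u₂
      + u₁ * u₃ / (u + 1) * deriv (fun t => u₂ * t / u) u₃ =
    2 * u₁ * u₂ * u₃ / (u * (u + 1)) := by
  have hu1' : u + 1 ≠ 0 := mt add_eq_zero_iff_eq_neg.mp hu1
  rw [deriv_const_div_id]
  simp only [deriv_div_const, deriv_mul_const_field, deriv_const_mul_id', deriv_id'']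
  field_simp
  ring

end Vassiliou

/-- The total-derivative compatibility (involutivity) conditions of Vassiliou's system
`u₁₂ = (2u+1)u₁u₂/(u(u+1))`, `u₁₃ = u₁u₃/(u+1)`, `u₂₃ = u₂u₃/u` hold identically,
and each of the three cross total derivatives equals `2u₁u₂u₃/(u(u+1))`. -/
theorem vassiliou_system_involutive
    (u u₁ u₂ u₃ : ℝ) (hu : u ≠ 0) (hu1 : u ≠ -1)
    (f₁₂ f₁₃ f₂₃ : ℝ)
    (hf₁₂ : f₁₂ = (2 * u + 1) * u₁ * u₂ / (u * (u + 1)))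
    (hf₁₃ : f₁₃ = u₁ * u₃ / (u + 1))
    (hf₂₃ : f₂₃ = u₂ * u₃ / u)
    (D₃f₁₂ D₂f₁₃ D₁f₂₃ : ℝ)
    (hD₃f₁₂ : D₃f₁₂ =
      u₃ * deriv (fun t => (2 * t + 1) * u₁ * u₂ / (t * (t + 1))) u
      + f₁₃ * deriv (fun t => (2 * u + 1) * t * u₂ / (u * (u + 1))) u₁
      + f₂₃ * deriv (fun t => (2 * u + 1) * u₁ * t / (u * (u + 1))) u₂)
    (hD₂f₁₃ : D₂f₁₃ =
      u₂ * deriv (fun t => u₁ * u₃ / (t + 1)) u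
      + f₁₂ * deriv (fun t => t * u₃ / (u + 1)) u₁
      + f₂₃ * deriv (fun t => u₁ * t / (u + 1)) u₃)
    (hD₁f₂₃ : D₁f₂₃ =
      u₁ * deriv (fun t => u₂ * u₃ / t) u
      + f₁₂ * deriv (fun t => t * u₃ / u) u₂
      + f₁₃ * deriv (fun t => u₂ * t / u) u₃) :
    D₃f₁₂ = D₂f₁₃ ∧ D₂f₁₃ = D₁f₂₃ ∧
    D₃f₁₂ = 2 * u₁ * u₂ * u₃ / (u * (u + 1)) := by
  subst hf₁₂ hf₁₃ hf₂₃ hD₃f₁₂ hD₂f₁₃ hD₁f₂₃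
  have h₃ := vassiliou_D₃f₁₂_eq u₁ u₂ u₃ hu hu1
  have h₂ := vassiliou_D₂f₁₃_eq u₁ u₂ u₃ hu hu1
  have h₁ := vassiliou_D₁f₂₃_eq u₁ u₂ u₃ hu hu1
  exact ⟨h₃.trans h₂.symm, h₂.trans h₁.symm, h₃⟩
end
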